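/- arXiv:1612.03136 — 3 statements merged into one kernel-verified Lean document; each statement's English description precedes it below -/
import Mathlib

section
/- Let f be an arithmetical function and N a positive integer. Define f' = f * μ (Dirichlet convolution with the Möbius function) and for r ≤ N set f̂(r) = Σ_{d ≤ N, r | d} f'(d)/d. Then for every n ≤ N, f(n) = Σ_{r ≤ N} f̂(r) · c_r(n). (Existence of the finite Ramanujan expansion.) -/
open Finset ArithmeticFunction

/-- `f' = f * μ`, the Dirichlet convolution of `f` with the Möbius function. -/
noncomputable def fprime (f : ℕ → ℂ) (d : ℕ) : ℂ :=
  ∑ e ∈ d.divisors, (moebius (d / e) : ℂ) * f e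

/-- The finite Ramanujan coefficient `f̂(r) = ∑_{d ≤ N, r | d} f'(d)/d`. -/
noncomputable def fhat (f : ℕ → ℂ) (N r : ℕ) : ℂ :=
  ∑ d ∈ (Finset.Icc 1 N).filter (fun d => r ∣ d), fprime f d / d

/-- The Ramanujan sum `c_r(n) = ∑_{e | gcd(n,r)} μ(r/e) e`. -/
def ramanujanC (r n : ℕ) : ℤ :=
  ∑ e ∈ (Nat.gcd n r).divisors, moebius (r / e) * e

/-
Both `f'` and `c_r(n)` are Möbius transforms: `f' = μ * f` and `c_•(n) = μ * h` with
`h(e) = e·[e ∣ n]`, so Möbius inversion gives `∑_{d ∣ n} f'(d) = f(n)` and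
`∑_{r ∣ d} c_r(n) = d·[d ∣ n]`. Swapping the two finite sums in `∑_r f̂(r) c_r(n)` turns it into
`∑_{d ≤ N} (f'(d)/d) ∑_{r ∣ d} c_r(n) = ∑_{d ∣ n} f'(d) = f(n)`, using that every divisor of
`n ≤ N` is at most `N`.
-/

open scoped ArithmeticFunction.Moebius

theorem sum_divisors_sum_moebius_mul {R : Type*} [NonAssocRing R] (g : ℕ → R) {n : ℕ}
    (hn : 0 < n) : ∑ d ∈ n.divisors, ∑ e ∈ d.divisors, (μ (d / e) : R) * g e = g n :=
  sum_eq_iff_sum_mul_moebius_eq.2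
    (fun _ _ => Nat.sum_divisorsAntidiagonal' (f := fun a b => (μ a : R) * g b)) n hn

theorem sum_divisors_fprime (f : ℕ → ℂ) {n : ℕ} (hn : 0 < n) :
    ∑ d ∈ n.divisors, fprime f d = f n :=
  sum_divisors_sum_moebius_mul f hn

theorem ramanujanC_eq_sum_divisors {r : ℕ} (hr : r ≠ 0) (n : ℕ) :
    ramanujanC r n = ∑ e ∈ r.divisors, μ (r / e) * if e ∣ n then (e : ℤ) else 0 := by
  have hgcd : {e ∈ r.divisors | e ∣ n} = (Nat.gcd n r).divisors := by
    ext e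
    simp [Nat.dvd_gcd_iff, hr, and_comm]
  simp_rw [ramanujanC, mul_ite, mul_zero, ← sum_filter, hgcd]

theorem sum_divisors_ramanujanC (d n : ℕ) :
    ∑ r ∈ d.divisors, ramanujanC r n = if d ∣ n then (d : ℤ) else 0 := by
  rcases Nat.eq_zero_or_pos d with rfl | hd
  · simp
  rw [← sum_divisors_sum_moebius_mul (fun e => if e ∣ n then (e : ℤ) else 0) hd]
  exact sum_congr rfl fun r hr => ramanujanC_eq_sum_divisors (Nat.pos_of_mem_divisors hr).ne' n

theorem filter_dvd_Icc_eq_divisors {d N : ℕ} (hd : 0 < d) (hdN : d ≤ N) :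
    {r ∈ Icc 1 N | r ∣ d} = d.divisors := by
  ext r
  simp only [mem_filter, mem_Icc, Nat.mem_divisors]
  exact ⟨fun ⟨_, h⟩ => ⟨h, hd.ne'⟩,
    fun ⟨h, _⟩ => ⟨⟨Nat.pos_of_dvd_of_pos h hd, (Nat.le_of_dvd hd h).trans hdN⟩, h⟩⟩

theorem sum_fhat_mul (f g : ℕ → ℂ) (N : ℕ) :
    ∑ r ∈ Icc 1 N, fhat f N r * g r =
      ∑ d ∈ Icc 1 N, fprime f d / d * ∑ r ∈ d.divisors, g r := by
  simp_rw [fhat, sum_mul, mul_sum]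
  refine sum_comm' fun r d => ?_
  simp only [mem_filter, mem_Icc, Nat.mem_divisors]
  constructor
  · rintro ⟨-, ⟨hd1, hdN⟩, hrd⟩
    exact ⟨⟨hrd, by omega⟩, hd1, hdN⟩
  · rintro ⟨⟨hrd, -⟩, hd1, hdN⟩
    exact ⟨⟨Nat.pos_of_dvd_of_pos hrd hd1, (Nat.le_of_dvd hd1 hrd).trans hdN⟩, ⟨hd1, hdN⟩, hrd⟩

theorem finite_ramanujan_expansion_general (f : ℕ → ℂ) (N : ℕ)
    (n : ℕ) (hn1 : 1 ≤ n) (hnN : n ≤ N) :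
    f n = ∑ r ∈ Finset.Icc 1 N, fhat f N r * (ramanujanC r n : ℂ) := by
  calc f n = ∑ d ∈ n.divisors, fprime f d := (sum_divisors_fprime f hn1).symm
    _ = ∑ d ∈ Icc 1 N, if d ∣ n then fprime f d else 0 := by
      rw [← sum_filter, filter_dvd_Icc_eq_divisors hn1 hnN]
    _ = ∑ d ∈ Icc 1 N, fprime f d / d * ∑ r ∈ d.divisors, (ramanujanC r n : ℂ) := by
      refine sum_congr rfl fun d hd => ?_
      have hd0 : (d : ℂ) ≠ 0 := Nat.cast_ne_zero.2 (by grind)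
      rw [← Int.cast_sum, sum_divisors_ramanujanC]
      split_ifs <;> simp [hd0]
    _ = ∑ r ∈ Icc 1 N, fhat f N r * (ramanujanC r n : ℂ) := (sum_fhat_mul f _ N).symm

/-- Existence of the finite Ramanujan expansion: for every `1 ≤ n ≤ N`,
`f(n) = ∑_{r ≤ N} f̂(r) c_r(n)`. -/
theorem finite_ramanujan_expansion (f : ℕ → ℂ) (N : ℕ) (hN : 0 < N)
    (n : ℕ) (hn1 : 1 ≤ n) (hnN : n ≤ N) :
    f n = ∑ r ∈ Finset.Icc 1 N, fhat f N r * (ramanujanC r n : ℂ) :=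
  finite_ramanujan_expansion_general f N n hn1 hnN
end

section
/- Let N ≥ 2 and let f̂ : ℕ → ℂ satisfy |f̂(r)| ≤ C / (r · (log r)^α) for all r ≥ 2 and some constants C > 0, α > 1. Define f'(d) = d · Σ_{j ≤ N/d} μ(j) f̂(jd). Then there is a constant C' depending only on C and α such that |f'(d)| ≤ C' / (log d)^{α-1} for all 2 ≤ d ≤ N. -/
/-!
As `log (j d) = log j + log d`, the bound on `f̂` and `|μ| ≤ 1` give
`|f'(d)| ≤ C ∑_{j ≥ 1} 1 / (j (log j + log d)^α)`. The `j = 1` term is `C / (log d)^α`, and the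
others are compared with `∫_1^∞ dt / (t (log t + log d)^α) = (log d)^{1-α} / (α - 1)`: the
tangent-line inequality for the convex function `x ↦ x^{1-α}` bounds the `j`-th term by a
difference of consecutive values of `(log j + log d)^{1-α} / (α - 1)`, so the sum telescopes.
-/

open Finset ArithmeticFunction Real

lemma one_add_mul_sub_one_le_rpow_of_nonpos {t p : ℝ} (ht : 0 < t) (hp : p ≤ 0) :
    1 + p * (t - 1) ≤ t ^ p := by
  rw [rpow_def_of_pos ht]
  nlinarith [add_one_le_exp (log t * p), log_le_sub_one_of_pos ht]

/-- The tangent line at `b` of the convex function `x ↦ x ^ p` on `(0, ∞)`, `p ≤ 0`. -/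
lemma rpow_add_mul_sub_mul_rpow_sub_one_le {a b p : ℝ} (ha : 0 < a) (hb : 0 < b) (hp : p ≤ 0) :
    b ^ p + p * (a - b) * b ^ (p - 1) ≤ a ^ p := by
  have h := one_add_mul_sub_one_le_rpow_of_nonpos (div_pos ha hb) hp
  rw [div_rpow ha.le hb.le, le_div_iff₀ (rpow_pos_of_pos hb p)] at h
  rw [rpow_sub_one hb.ne']
  exact (le_of_eq (by field_simp)).trans h

lemma one_div_add_one_le_log_add_one_sub_log {x : ℝ} (hx : 0 < x) :
    1 / (x + 1) ≤ Real.log (x + 1) - Real.log x := by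
  have h := one_sub_inv_le_log_of_pos (div_pos (by linarith : 0 < x + 1) hx)
  rw [log_div (by linarith) hx.ne', inv_div] at h
  convert h using 1
  field_simp
  ring

lemma sub_one_div_mul_log_add_rpow_le {α L x : ℝ} (hα : 1 ≤ α) (hL : 0 < L) (hx : 1 ≤ x) :
    (α - 1) / ((x + 1) * (Real.log (x + 1) + L) ^ α)
      ≤ (Real.log x + L) ^ (1 - α) - (Real.log (x + 1) + L) ^ (1 - α) := by
  have ha : 0 < Real.log x + L := by linarith [log_nonneg hx]
  have hb : 0 < Real.log (x + 1) + L := by linarith [log_nonneg (by linarith : 1 ≤ x + 1)]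
  have hgap := one_div_add_one_le_log_add_one_sub_log (by linarith : 0 < x)
  have htangent := rpow_add_mul_sub_mul_rpow_sub_one_le ha hb (by linarith : 1 - α ≤ 0)
  rw [show 1 - α - 1 = -α by ring, rpow_neg hb.le] at htangent
  calc (α - 1) / ((x + 1) * (Real.log (x + 1) + L) ^ α)
      = (α - 1) * (1 / (x + 1)) * ((Real.log (x + 1) + L) ^ α)⁻¹ := by field_simp
    _ ≤ (α - 1) * (Real.log (x + 1) - Real.log x) * ((Real.log (x + 1) + L) ^ α)⁻¹ := by
      gcongr
    _ ≤ _ := by linarith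

lemma Finset.sum_Icc_le_add_sub_of_le_sub {f g : ℕ → ℝ} {m n : ℕ} (hmn : m ≤ n)
    (h : ∀ j, m ≤ j → f (j + 1) ≤ g j - g (j + 1)) :
    ∑ j ∈ Icc m n, f j ≤ f m + (g m - g n) := by
  induction n, hmn using Nat.le_induction with
  | base => simp
  | succ n hmn ih =>
    rw [sum_Icc_succ_top (by omega)]
    linarith [h n hmn]

lemma sum_Icc_one_div_mul_log_add_rpow_le {α L : ℝ} (hα : 1 < α) (hL : 0 < L) (K : ℕ) :
    ∑ j ∈ Icc 1 K, 1 / (j * (Real.log j + L) ^ α) ≤ 1 / L ^ α + L ^ (1 - α) / (α - 1) := by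
  have hβ : 0 < α - 1 := by linarith
  rcases Nat.eq_zero_or_pos K with rfl | hK
  · simp only [Icc_eq_empty_of_lt zero_lt_one, sum_empty]
    positivity
  set g : ℕ → ℝ := fun j ↦ (Real.log j + L) ^ (1 - α) / (α - 1)
  have hstep : ∀ j, 1 ≤ j →
      1 / (((j + 1 : ℕ) : ℝ) * (Real.log ((j + 1 : ℕ) : ℝ) + L) ^ α) ≤ g j - g (j + 1) := by
    intro j hj
    rw [← sub_div, le_div_iff₀ hβ, div_mul_eq_mul_div, one_mul]
    push_cast
    exact sub_one_div_mul_log_add_rpow_le hα.le hL (Nat.one_le_cast.mpr hj)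
  have hgK : 0 ≤ g K := div_nonneg (rpow_nonneg (by positivity) _) hβ.le
  calc ∑ j ∈ Icc 1 K, 1 / (j * (Real.log j + L) ^ α)
      ≤ 1 / ((1 : ℕ) * (Real.log (1 : ℕ) + L) ^ α) + (g 1 - g K) :=
        sum_Icc_le_add_sub_of_le_sub hK hstep
    _ ≤ 1 / L ^ α + L ^ (1 - α) / (α - 1) := by
        simp only [g, Nat.cast_one, log_one, zero_add, one_mul]
        linarith

lemma norm_natCast_mul_moebius_mul_le {C α : ℝ} {fh : ℕ → ℂ}
    (hfh : ∀ r : ℕ, 2 ≤ r → ‖fh r‖ ≤ C / (r * Real.log r ^ α)) {d j : ℕ} (hd : 2 ≤ d) (hj : 1 ≤ j) :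
    ‖(d : ℂ) * ((moebius j : ℂ) * fh (j * d))‖ ≤ C / (j * (Real.log j + Real.log d) ^ α) := by
  have hμ : ‖(moebius j : ℂ)‖ ≤ 1 := by
    rw [Complex.norm_intCast]
    exact_mod_cast abs_moebius_le_one
  have hjd : 2 ≤ j * d := le_mul_of_one_le_of_le hj hd
  calc ‖(d : ℂ) * ((moebius j : ℂ) * fh (j * d))‖ = d * (‖(moebius j : ℂ)‖ * ‖fh (j * d)‖) := by
        rw [norm_mul, norm_mul, Complex.norm_natCast]
    _ ≤ d * (C / ((j * d : ℕ) * Real.log (j * d : ℕ) ^ α)) := by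
        gcongr
        exact (mul_le_of_le_one_left (norm_nonneg _) hμ).trans (hfh _ hjd)
    _ = C / (j * (Real.log j + Real.log d) ^ α) := by
        have hj0 : (j : ℝ) ≠ 0 := by positivity
        have hd0 : (d : ℝ) ≠ 0 := by positivity
        rw [Nat.cast_mul, log_mul hj0 hd0]
        field_simp

lemma norm_natCast_mul_sum_moebius_mul_le {C α : ℝ} {fh : ℕ → ℂ}
    (hfh : ∀ r : ℕ, 2 ≤ r → ‖fh r‖ ≤ C / (r * Real.log r ^ α)) {d : ℕ} (hd : 2 ≤ d) (K : ℕ) :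
    ‖(d : ℂ) * ∑ j ∈ Icc 1 K, (moebius j : ℂ) * fh (j * d)‖
      ≤ C * ∑ j ∈ Icc 1 K, 1 / (j * (Real.log j + Real.log d) ^ α) := by
  rw [mul_sum, mul_sum]
  refine (norm_sum_le _ _).trans (sum_le_sum fun j hj ↦ ?_)
  rw [mul_one_div]
  exact norm_natCast_mul_moebius_mul_le hfh hd (mem_Icc.mp hj).1

lemma one_div_rpow_add_rpow_one_sub_div_le {α L : ℝ} (hL : Real.log 2 ≤ L) :
    1 / L ^ α + L ^ (1 - α) / (α - 1) ≤ (1 / Real.log 2 + 1 / (α - 1)) / L ^ (α - 1) := by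
  have hL0 : 0 < L := (log_pos one_lt_two).trans_le hL
  have hLα : L ^ α = L ^ (α - 1) * L := by
    rw [← rpow_add_one hL0.ne', sub_add_cancel]
  rw [add_div, show 1 - α = -(α - 1) by ring, rpow_neg hL0.le, hLα]
  gcongr ?_ + ?_
  · rw [div_div, mul_comm]
    gcongr
  · exact le_of_eq (by field_simp)

/-- If `|fh(r)| ≤ C / (r (log r)^α)` for `r ≥ 2` (with `α > 1`), then
`f'(d) = d ∑_{j ≤ N/d} μ(j) fh(jd)` satisfies `|f'(d)| ≤ C' / (log d)^{α-1}`
for `2 ≤ d ≤ N`, with `C'` depending only on `C` and `α`. -/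
theorem fprime_bound_of_fhat_log_bound (C α : ℝ) (hC : 0 < C) (hα : 1 < α) :
    ∃ C' : ℝ, 0 < C' ∧ ∀ (N : ℕ), 2 ≤ N → ∀ fh : ℕ → ℂ,
      (∀ r : ℕ, 2 ≤ r → ‖fh r‖ ≤ C / (r * (Real.log r) ^ α)) →
      ∀ d : ℕ, 2 ≤ d → d ≤ N →
        ‖(d : ℂ) * ∑ j ∈ Finset.Icc 1 (N / d), (moebius j : ℂ) * fh (j * d)‖
          ≤ C' / (Real.log d) ^ (α - 1) := by
  have hβ : 0 < α - 1 := by linarith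
  refine ⟨C * (1 / Real.log 2 + 1 / (α - 1)), by positivity, fun N _ fh hfh d hd _ ↦ ?_⟩
  have hL : Real.log 2 ≤ Real.log d := log_le_log two_pos (Nat.ofNat_le_cast.mpr hd)
  calc ‖(d : ℂ) * ∑ j ∈ Icc 1 (N / d), (moebius j : ℂ) * fh (j * d)‖
      ≤ C * ∑ j ∈ Icc 1 (N / d), 1 / (j * (Real.log j + Real.log d) ^ α) :=
        norm_natCast_mul_sum_moebius_mul_le hfh hd _
    _ ≤ C * (1 / Real.log d ^ α + Real.log d ^ (1 - α) / (α - 1)) := by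
        gcongr
        exact sum_Icc_one_div_mul_log_add_rpow_le hα ((log_pos one_lt_two).trans_le hL) _
    _ ≤ C * ((1 / Real.log 2 + 1 / (α - 1)) / Real.log d ^ (α - 1)) := by
        gcongr
        exact one_div_rpow_add_rpow_one_sub_div_le hL
    _ = C * (1 / Real.log 2 + 1 / (α - 1)) / Real.log d ^ (α - 1) := (mul_div_assoc _ _ _).symm
end

section
/- Let N ≥ 2 and let f' : ℕ → ℂ be supported on [1, N] with |f'(d)| ≤ C / (log d)^β for all d ≥ 2, for constants C > 0 and β > 1. Define f̂(r) = Σ_{d ≤ N, r | d} f'(d)/d. Then there is a constant C' depending only on C and β such that |f̂(r)| ≤ C' / (r · (log r)^{β-1}) for all 2 ≤ r ≤ N. -/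
/-!
After the substitution `d = r (n + 1)`, each term is at most `C / (r (n + 1) (log (r (n + 1)))^β)`.
The term `n = 0` contributes `C / (r (log r)^β)`. For the others, the mean value theorem for
`x ↦ (log x)^(1-β)` on `[r (n + 1), r (n + 2)]`, whose derivative `(1-β) / (x (log x)^β)` is
increasing, bounds `(β - 1) / ((n + 2) (log (r (n + 2)))^β)` by a difference of consecutive values
of `(log (r (n + 1)))^(1-β)`; the sum telescopes to at most `(log r)^(1-β)`.
-/

open Finset ArithmeticFunction

theorem hasDerivAt_log_rpow_one_sub (β : ℝ) {x : ℝ} (hx : 1 < x) :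
    HasDerivAt (fun y => Real.log y ^ (1 - β)) ((1 - β) / (x * Real.log x ^ β)) x := by
  have hlog : 0 < Real.log x := Real.log_pos hx
  convert (Real.hasDerivAt_log (by positivity)).rpow_const (p := 1 - β) (Or.inl hlog.ne') using 1
  rw [sub_sub_cancel_left, Real.rpow_neg hlog.le]
  field_simp

theorem mul_sub_div_le_log_rpow_one_sub_sub {β a b : ℝ} (hβ : 1 ≤ β) (ha : 1 < a) (hab : a < b) :
    (β - 1) * (b - a) / (b * Real.log b ^ β) ≤ Real.log a ^ (1 - β) - Real.log b ^ (1 - β) := by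
  obtain ⟨c, ⟨hac, hcb⟩, hslope⟩ := exists_hasDerivAt_eq_slope _ _ hab
    (fun x hx => (hasDerivAt_log_rpow_one_sub β (ha.trans_le hx.1)).continuousAt.continuousWithinAt)
    (fun x hx => hasDerivAt_log_rpow_one_sub β (ha.trans hx.1))
  have hc : 1 < c := ha.trans hac
  have hlogc : 0 < Real.log c := Real.log_pos hc
  have hden : c * Real.log c ^ β ≤ b * Real.log b ^ β := by
    gcongr
    linarith
  calc (β - 1) * (b - a) / (b * Real.log b ^ β) ≤ (β - 1) * (b - a) / (c * Real.log c ^ β) := by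
        gcongr
    _ = Real.log a ^ (1 - β) - Real.log b ^ (1 - β) := by
        rw [eq_div_iff (sub_pos.2 hab).ne'] at hslope
        linear_combination -hslope

theorem sum_filter_dvd_Icc_one_eq_sum_range {M : Type*} [AddCommMonoid M] (F : ℕ → M) {r : ℕ}
    (hr : 0 < r) (N : ℕ) :
    ∑ d ∈ (Icc 1 N).filter (r ∣ ·), F d = ∑ n ∈ range (N / r), F (r * (n + 1)) := by
  have hinj : Function.Injective fun n => r * (n + 1) := fun m n h => by
    simpa using Nat.eq_of_mul_eq_mul_left hr h
  refine Eq.trans ?_ (sum_map _ ⟨_, hinj⟩ F)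
  congr 1
  ext d
  simp only [mem_filter, mem_Icc, mem_map, mem_range, Function.Embedding.coeFn_mk,
    Nat.lt_iff_add_one_le, Nat.le_div_iff_mul_le hr, mul_comm _ r]
  constructor
  · rintro ⟨⟨hd1, hdN⟩, k, rfl⟩
    obtain ⟨n, rfl⟩ : ∃ n, k = n + 1 := Nat.exists_eq_add_one.2 (Nat.pos_of_mul_pos_left hd1)
    exact ⟨n, hdN, rfl⟩
  · rintro ⟨n, hn, rfl⟩
    exact ⟨⟨Nat.mul_pos hr n.succ_pos, hn⟩, dvd_mul_right _ _⟩

theorem sum_range_inv_mul_log_rpow_le {β r : ℝ} (hβ : 1 < β) (hr : 1 < r) (M : ℕ) :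
    ∑ n ∈ range M, 1 / ((n + 1) * Real.log (r * (n + 1)) ^ β)
      ≤ ((Real.log r)⁻¹ + (β - 1)⁻¹) / Real.log r ^ (β - 1) := by
  have hlog : 0 < Real.log r := Real.log_pos hr
  have hβ' : 0 < β - 1 := sub_pos.2 hβ
  set g : ℕ → ℝ := fun n => Real.log (r * (n + 1)) ^ (1 - β)
  have hstep (n : ℕ) : (β - 1) * (1 / ((n + 1 + 1) * Real.log (r * (n + 1 + 1)) ^ β))
      ≤ g n - g (n + 1) := by
    have h := mul_sub_div_le_log_rpow_one_sub_sub hβ.le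
      (a := r * (n + 1)) (b := r * (n + 1 + 1)) (by nlinarith) (by nlinarith)
    push_cast [g]
    convert h using 1
    field_simp
    ring
  have htail : (β - 1) * ∑ n ∈ range M, 1 / ((n + 1 + 1) * Real.log (r * (n + 1 + 1)) ^ β)
      ≤ Real.log r ^ (1 - β) := by
    calc _ ≤ ∑ n ∈ range M, (g n - g (n + 1)) := by
          rw [mul_sum]
          exact sum_le_sum fun n _ => hstep n
      _ = g 0 - g M := sum_range_sub' g M
      _ ≤ Real.log r ^ (1 - β) := by
          have : 0 ≤ g M := Real.rpow_nonneg (Real.log_nonneg (by nlinarith)) _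
          simp only [g, CharP.cast_eq_zero, zero_add, mul_one]
          linarith
  calc _ ≤ ∑ n ∈ range (M + 1), 1 / ((n + 1) * Real.log (r * (n + 1)) ^ β) := by
        gcongr
        · intro n _ _
          have := Real.log_nonneg (show 1 ≤ r * (n + 1) by nlinarith)
          positivity
        · omega
    _ = ∑ n ∈ range M, 1 / ((n + 1 + 1) * Real.log (r * (n + 1 + 1)) ^ β)
          + 1 / Real.log r ^ β := by
        rw [sum_range_succ']
        push_cast
        simp
    _ ≤ _ := by
        have hL : 0 < Real.log r ^ β := Real.rpow_pos_of_pos hlog _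
        rw [show 1 - β = -(β - 1) by ring, Real.rpow_neg hlog.le, ← le_div_iff₀' hβ',
          Real.rpow_sub_one hlog.ne'] at htail
        calc _ ≤ (Real.log r ^ β / Real.log r)⁻¹ / (β - 1) + 1 / Real.log r ^ β := by gcongr
          _ = _ := by
            rw [Real.rpow_sub_one hlog.ne']
            field_simp
            ring

/-- If `f'` is supported on `[1, N]` with `|f'(d)| ≤ C / (log d)^β` for `d ≥ 2`
(with `β > 1`), then `f̂(r) = ∑_{d ≤ N, r | d} f'(d)/d` satisfies
`|f̂(r)| ≤ C' / (r (log r)^{β-1})` for `2 ≤ r ≤ N`, with `C'` depending only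
on `C` and `β`. -/
theorem fhat_bound_of_fprime_log_bound (C β : ℝ) (hC : 0 < C) (hβ : 1 < β) :
    ∃ C' : ℝ, 0 < C' ∧ ∀ (N : ℕ), 2 ≤ N → ∀ f' : ℕ → ℂ,
      (∀ d : ℕ, (d = 0 ∨ N < d) → f' d = 0) →
      (∀ d : ℕ, 2 ≤ d → ‖f' d‖ ≤ C / (Real.log d) ^ β) →
      ∀ r : ℕ, 2 ≤ r → r ≤ N →
        ‖∑ d ∈ (Finset.Icc 1 N).filter (fun d => r ∣ d), f' d / d‖
          ≤ C' / (r * (Real.log r) ^ (β - 1)) := by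
  have hβ' : 0 < β - 1 := sub_pos.2 hβ
  refine ⟨C * ((Real.log 2)⁻¹ + (β - 1)⁻¹), by positivity, ?_⟩
  intro N _ f' _ hf' r hr _
  have hr1 : (1 : ℝ) < r := by exact_mod_cast hr
  have hterm (n : ℕ) : ‖f' (r * (n + 1)) / ((r * (n + 1) : ℕ) : ℂ)‖
      ≤ C / r * (1 / ((n + 1) * Real.log (r * (n + 1)) ^ β)) := by
    have h := hf' (r * (n + 1)) (by nlinarith)
    rw [norm_div, Complex.norm_natCast]
    push_cast at h ⊢
    calc _ ≤ C / Real.log (r * (n + 1)) ^ β / (r * (n + 1)) := by gcongr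
      _ = _ := by field_simp
  rw [sum_filter_dvd_Icc_one_eq_sum_range _ (by omega)]
  calc _ ≤ ∑ n ∈ range (N / r), C / r * (1 / ((n + 1) * Real.log (r * (n + 1)) ^ β)) :=
        norm_sum_le_of_le _ fun n _ => hterm n
    _ ≤ C / r * (((Real.log r)⁻¹ + (β - 1)⁻¹) / Real.log r ^ (β - 1)) := by
        rw [← mul_sum]
        gcongr
        exact sum_range_inv_mul_log_rpow_le hβ hr1 _
    _ ≤ C / r * (((Real.log 2)⁻¹ + (β - 1)⁻¹) / Real.log r ^ (β - 1)) := by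
        gcongr
        exact_mod_cast hr
    _ = _ := by ring
end
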